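/- Let ω > 0 be a real number, n ∈ ℕ, and let m be an integer with 0 ≤ m ≤ n. Then the m-th derivative of S_n^ω at z = −1 equals (d^m/dz^m) S_n^ω(−1) = (−1)^{n−m} · n! · ((1+ω)_m/(1+ω)_n) · binom(n,m). -/

import Mathlib

/-!
Reversing the factors of `(-n-ω)_ℓ` gives `(-n-ω)_ℓ · (1+ω)_{n-ℓ} = (-1)^ℓ (1+ω)_n`, so the
`ℓ`-th coefficient of `S_n^ω` is `(-1)^ℓ binom(n,ℓ) (-ω)_ℓ (1+ω)_{n-ℓ} / (1+ω)_n`. Differentiating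
`m` times at `-1` and using `binom(n,ℓ) (n-ℓ)^{\underline m} = n^{\underline m} binom(n-m,ℓ)` and
`(1+ω)_{n-ℓ} = (1+ω)_m (1+ω+m)_{n-m-ℓ}`, everything except the sum
`Σ_ℓ binom(n-m,ℓ) (-ω)_ℓ (1+ω+m)_{n-m-ℓ}` factors out, and by Chu–Vandermonde this sum is
`(1+m)_{n-m} = n!/m!`.
-/

open Finset Polynomial

/-- The monic skyburst polynomial
`S_n^ω(z) = Σ_{ℓ=0}^n binom(n,ℓ) · (−ω)_ℓ/(−n−ω)_ℓ · z^{n−ℓ}`,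
where `(a)_ℓ` is the Pochhammer (rising factorial) symbol. -/
noncomputable def skyburst (n : ℕ) (ω : ℝ) (z : ℂ) : ℂ :=
  ∑ ℓ ∈ Finset.range (n + 1),
    (n.choose ℓ : ℂ) *
      ((ascPochhammer ℂ ℓ).eval (-(ω : ℂ)) / (ascPochhammer ℂ ℓ).eval (-(n : ℂ) - (ω : ℂ))) *
      z ^ (n - ℓ)

theorem Nat.choose_mul_descFactorial_sub (n ℓ m : ℕ) :
    n.choose ℓ * (n - ℓ).descFactorial m = n.descFactorial m * (n - m).choose ℓ := by
  -- after dividing by `m!`, both sides equal `binom(n, ℓ+m) · binom(ℓ+m, m)`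
  have h₁ := Nat.choose_mul (n := n) (Nat.le_add_right ℓ m)
  have h₂ := Nat.choose_mul (n := n) (Nat.le_add_left m ℓ)
  rw [Nat.add_sub_cancel_left, Nat.choose_symm_add] at h₁
  rw [Nat.add_sub_cancel] at h₂
  rw [Nat.descFactorial_eq_factorial_mul_choose, Nat.descFactorial_eq_factorial_mul_choose]
  grind

namespace Polynomial

section CommRing

variable {R : Type*} [CommRing R]

/-- Chu–Vandermonde for rising factorials, obtained from `Ring.descPochhammer_smeval_add` through
`(x)_k = (-1)^k (-x)^{\underline k}`. -/
theorem ascPochhammer_eval_add (x y : R) (N : ℕ) :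
    (ascPochhammer R N).eval (x + y) = ∑ ℓ ∈ range (N + 1),
      N.choose ℓ * (ascPochhammer R ℓ).eval x * (ascPochhammer R (N - ℓ)).eval y := by
  have hdesc (r : R) (k : ℕ) : (descPochhammer ℤ k).smeval r = (descPochhammer R k).eval r := by
    rw [← aeval_eq_smeval, aeval_def, ← eval_map, algebraMap_int_eq, descPochhammer_map]
  have hasc (r : R) (k : ℕ) :
      (ascPochhammer R k).eval r = (-1) ^ k * (descPochhammer ℤ k).smeval (-r) := by
    rw [hdesc, ← ascPochhammer_eval_neg_eq_descPochhammer, neg_neg]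
  rw [hasc, neg_add, Ring.descPochhammer_smeval_add _ (Commute.all _ _),
    Nat.sum_antidiagonal_eq_sum_range_succ (fun i j => (N.choose i : R) *
      ((descPochhammer ℤ i).smeval (-x) * (descPochhammer ℤ j).smeval (-y))), mul_sum]
  refine sum_congr rfl fun ℓ hℓ => ?_
  have hsign : (-1 : R) ^ N = (-1) ^ ℓ * (-1) ^ (N - ℓ) := by
    rw [← pow_add, Nat.add_sub_cancel' (Nat.lt_succ_iff.mp (mem_range.mp hℓ))]
  rw [hasc x, hasc y, hsign]
  ring

theorem ascPochhammer_add_eval (x : R) (p q : ℕ) :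
    (ascPochhammer R (p + q)).eval x =
      (ascPochhammer R p).eval x * (ascPochhammer R q).eval (x + p) := by
  simp [← ascPochhammer_mul, eval_comp]

theorem ascPochhammer_eval_neg_sub_mul (w : R) {ℓ n : ℕ} (h : ℓ ≤ n) :
    (ascPochhammer R ℓ).eval (-n - w) * (ascPochhammer R (n - ℓ)).eval (1 + w) =
      (-1) ^ ℓ * (ascPochhammer R n).eval (1 + w) := by
  obtain ⟨k, rfl⟩ := Nat.exists_eq_add_of_le' h
  rw [sub_eq_add_neg, ← neg_add, ascPochhammer_eval_neg_eq_descPochhammer,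
    descPochhammer_eval_eq_ascPochhammer, ascPochhammer_add_eval, Nat.add_sub_cancel]
  push_cast
  ring_nf

end CommRing

theorem inv_ascPochhammer_eval_neg_sub {K : Type*} [Field K] (w : K) {ℓ n : ℕ}
    (h : ℓ ≤ n) (hw : (ascPochhammer K n).eval (1 + w) ≠ 0) :
    ((ascPochhammer K ℓ).eval (-n - w))⁻¹ =
      (-1) ^ ℓ * (ascPochhammer K (n - ℓ)).eval (1 + w) / (ascPochhammer K n).eval (1 + w) := by
  have hprod := ascPochhammer_eval_neg_sub_mul w h
  have hne : (ascPochhammer K ℓ).eval (-n - w) ≠ 0 := by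
    rintro h0
    rw [h0, zero_mul] at hprod
    exact hw (by simpa using hprod.symm)
  have hsq : (-1 : K) ^ ℓ * (-1) ^ ℓ = 1 := by rw [← mul_pow]; simp
  rw [eq_div_iff hw, inv_mul_eq_iff_eq_mul₀ hne]
  linear_combination (-(-1 : K) ^ ℓ) * hprod - (ascPochhammer K n).eval (1 + w) * hsq

theorem ascPochhammer_eval_one_add_ofReal_ne_zero {ω : ℝ} (hω : -1 < ω) (n : ℕ) :
    (ascPochhammer ℂ n).eval (1 + (ω : ℂ)) ≠ 0 := by
  rw [Ne, ascPochhammer_eval_eq_zero_iff]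
  rintro ⟨k, -, hk⟩
  have hre : (k : ℝ) = -(1 + ω) := by simpa using congrArg Complex.re hk
  linarith [(k.cast_nonneg : (0 : ℝ) ≤ k)]

end Polynomial

section SkyburstCoeff

variable {K : Type*} [Field K]

noncomputable def skyburstCoeff (n : ℕ) (w : K) (ℓ : ℕ) : K :=
  n.choose ℓ * ((ascPochhammer K ℓ).eval (-w) / (ascPochhammer K ℓ).eval (-n - w))

theorem skyburstCoeff_mul_descFactorial {n m ℓ : ℕ} {w : K} (hℓ : ℓ + m ≤ n)
    (hw : (ascPochhammer K n).eval (1 + w) ≠ 0) :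
    skyburstCoeff n w ℓ * ((n - ℓ).descFactorial m * (-1) ^ (n - ℓ - m)) =
      (-1) ^ (n - m) * n.descFactorial m *
          ((ascPochhammer K m).eval (1 + w) / (ascPochhammer K n).eval (1 + w)) *
        ((n - m).choose ℓ * (ascPochhammer K ℓ).eval (-w) *
          (ascPochhammer K (n - m - ℓ)).eval (1 + w + m)) := by
  have hsplit : (ascPochhammer K (n - ℓ)).eval (1 + w) =
      (ascPochhammer K m).eval (1 + w) * (ascPochhammer K (n - m - ℓ)).eval (1 + w + m) := by
    rw [← ascPochhammer_add_eval, show m + (n - m - ℓ) = n - ℓ by omega]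
  have hsign : (-1 : K) ^ ℓ * (-1) ^ (n - ℓ - m) = (-1) ^ (n - m) := by
    rw [← pow_add, show ℓ + (n - ℓ - m) = n - m by omega]
  have hchoose : (n.choose ℓ : K) * (n - ℓ).descFactorial m =
      n.descFactorial m * (n - m).choose ℓ := by
    exact_mod_cast congrArg (Nat.cast (R := K)) (Nat.choose_mul_descFactorial_sub n ℓ m)
  rw [skyburstCoeff, div_eq_mul_inv _ ((ascPochhammer K ℓ).eval _),
    inv_ascPochhammer_eval_neg_sub _ (by omega) hw, hsplit]
  field_simp
  linear_combination ((ascPochhammer K ℓ).eval (-w) * (ascPochhammer K m).eval (1 + w) *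
      (ascPochhammer K (n - m - ℓ)).eval (1 + w + m)) *
    ((-1) ^ ℓ * (-1) ^ (n - ℓ - m) * hchoose + n.descFactorial m * (n - m).choose ℓ * hsign)

theorem sum_skyburstCoeff_mul_descFactorial {n m : ℕ} {w : K} (hm : m ≤ n)
    (hw : (ascPochhammer K n).eval (1 + w) ≠ 0) :
    ∑ ℓ ∈ range (n + 1), skyburstCoeff n w ℓ * ((n - ℓ).descFactorial m * (-1) ^ (n - ℓ - m)) =
      (-1) ^ (n - m) * n.factorial *
        ((ascPochhammer K m).eval (1 + w) / (ascPochhammer K n).eval (1 + w)) * n.choose m := by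
  have hvanish : ∀ ℓ ∈ range (n + 1), ℓ ∉ range (n - m + 1) →
      skyburstCoeff n w ℓ * ((n - ℓ).descFactorial m * (-1) ^ (n - ℓ - m)) = 0 := by
    intro ℓ hℓn hℓ
    rw [mem_range] at hℓn hℓ
    rw [Nat.descFactorial_eq_zero_iff_lt.mpr (by omega), Nat.cast_zero, zero_mul, mul_zero]
  have hfact : (n.descFactorial m : K) * (ascPochhammer K (n - m)).eval (m + 1 : K) =
      n.factorial * n.choose m := by
    rw [Nat.descFactorial_eq_factorial_mul_choose, Nat.cast_mul, mul_right_comm,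
      factorial_mul_ascPochhammer, Nat.add_sub_cancel' hm]
  rw [← sum_subset (range_subset_range.mpr (by omega)) hvanish,
    sum_congr rfl fun ℓ hℓ => skyburstCoeff_mul_descFactorial (by have := mem_range.mp hℓ; omega) hw,
    ← mul_sum, ← ascPochhammer_eval_add, show -w + (1 + w + m) = m + 1 by ring]
  linear_combination (-1 : K) ^ (n - m) *
    ((ascPochhammer K m).eval (1 + w) / (ascPochhammer K n).eval (1 + w)) * hfact

end SkyburstCoeff

theorem iteratedDeriv_skyburst (n : ℕ) (ω : ℝ) (m : ℕ) (z : ℂ) :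
    iteratedDeriv m (skyburst n ω) z = ∑ ℓ ∈ range (n + 1),
      skyburstCoeff n (ω : ℂ) ℓ * ((n - ℓ).descFactorial m * z ^ (n - ℓ - m)) := by
  unfold skyburst
  rw [iteratedDeriv_fun_sum fun ℓ _ => by fun_prop]
  simp only [iteratedDeriv_const_mul_field, iteratedDeriv_pow, skyburstCoeff]

theorem skyburst_iteratedDeriv_at_neg_one (ω : ℝ) (hω : 0 < ω) (n : ℕ) (m : ℕ) (hm : m ≤ n) :
    iteratedDeriv m (skyburst n ω) (-1) =
      (-1 : ℂ) ^ (n - m) * (n.factorial : ℂ) *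
        ((ascPochhammer ℂ m).eval (1 + (ω : ℂ)) / (ascPochhammer ℂ n).eval (1 + (ω : ℂ))) *
        (n.choose m : ℂ) := by
  rw [iteratedDeriv_skyburst]
  exact sum_skyburstCoeff_mul_descFactorial hm
    (ascPochhammer_eval_one_add_ofReal_ne_zero (by linarith) n)
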